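/- The operator U_0 = -T_0 + Z - 1/2 satisfies U_0² = u_0²·𝟙 on functions f : ℂ → ℂ (away from z = 1/2). -/
import Mathlib

noncomputable def T0op (t0 u0 : ℂ) (f : ℂ → ℂ) : ℂ → ℂ :=
  fun z => (t0 + u0 - z + 1/2) * (t0 - u0 - z + 1/2) / (1 - 2 * z) * (f (1 - z) - f z)
    + t0 * f z

/-- `U₀ = -T₀ + Z - 1/2`, where `Z` is multiplication by `z`. -/
noncomputable def U0op (t0 u0 : ℂ) (f : ℂ → ℂ) : ℂ → ℂ :=
  fun z => -(T0op t0 u0 f z) + z * f z - (1/2) * f z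

/-- `U₀² = u₀² 𝟙` away from `z = 1/2`. -/
theorem U0_sq (t0 u0 : ℂ) (f : ℂ → ℂ) (z : ℂ) (hz : z ≠ 1/2) :
    U0op t0 u0 (U0op t0 u0 f) z = u0 ^ 2 * f z := by
  have h : (1:ℂ) - 2 * z ≠ 0 := by
    intro h; apply hz; linear_combination -h/2
  have hdd : ((1:ℂ) - 2 * z) * ((1:ℂ) - 2 * z)⁻¹ = 1 := mul_inv_cancel₀ h
  simp only [U0op, T0op, show (1:ℂ) - (1 - z) = z by ring,
    show (1:ℂ) - 2 * (1 - z) = -(1 - 2 * z) by ring, div_neg]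
  generalize f (1 - z) = a
  generalize f z = b
  set i := ((1:ℂ) - 2 * z)⁻¹ with hi
  linear_combination
    ((-1/4 : ℂ) * b + z * b - z^2 * b + u0^2 * b - t0 * b
      + (1/2) * t0 * b * i - (1/2) * t0 * a * i
      + 2 * t0 * z * b - 2 * t0 * z * b * i + 2 * t0 * z * a * i
      + 2 * t0 * z^2 * b * i - 2 * t0 * z^2 * a * i
      - 2 * t0 * u0^2 * b * i + 2 * t0 * u0^2 * a * i
      - t0^2 * b + 2 * t0^2 * b * i - 2 * t0^2 * a * i
      - 4 * t0^2 * z * b * i + 4 * t0^2 * z * a * i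
      + 2 * t0^3 * b * i - 2 * t0^3 * a * i) * hdd
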